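/- arXiv:2401.00584 — 8 statements merged into one kernel-verified Lean document; each statement's English description precedes it below -/
import Mathlib

section
/- Let t be a nonnegative form on H with representing map Q (so t[φ,ψ] = ⟨Qφ,Qψ⟩ on dom t = dom Q). Then t is singular if and only if Q is a singular operator (i.e., ran Q is contained in the multivalued part of the closure of the graph of Q; equivalently, for every φ ∈ dom Q there exist φ_n ∈ dom Q with φ_n → φ and Qφ_n → 0). In this case m(t) = 0. -/
open Filter Topology
open scoped ComplexOrder

noncomputable section

variable {H K K' : Type*}

/-- Sesquilinear forms with domain `D`: linear in the first argument,
conjugate-linear in the second. -/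
abbrev Form [NormedAddCommGroup H] [InnerProductSpace ℂ H] (D : Submodule ℂ H) : Type _ :=
  ↥D →ₗ[ℂ] (↥D →ₛₗ[starRingEnd ℂ] ℂ)

section Defs

variable [NormedAddCommGroup H] [InnerProductSpace ℂ H]
  [NormedAddCommGroup K] [InnerProductSpace ℂ K]
  {D : Submodule ℂ H}

/-- `t[φ,φ] ≥ c‖φ‖²` on the domain (in the complex order, so diagonal values are real). -/
def BddBelowBy (t : Form D) (c : ℝ) : Prop :=
  ∀ φ : ↥D, (↑(c * ‖(φ : H)‖ ^ 2) : ℂ) ≤ t φ φ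

/-- The set of Rayleigh quotients of the form `t`; its infimum is the lower bound `m(t)`. -/
def rayleighSet (t : Form D) : Set ℝ :=
  {r : ℝ | ∃ φ : ↥D, (φ : H) ≠ 0 ∧ r = (t φ φ).re / ‖(φ : H)‖ ^ 2}

/-- `Q` is a representing map for the form `t - c` :
`t[φ,ψ] - c(φ,ψ) = (Qφ,Qψ)` (forms/inner products linear in the first entry). -/
def IsRepMap (t : Form D) (c : ℝ) (Q : ↥D →ₗ[ℂ] K) : Prop :=
  ∀ φ ψ : ↥D, t φ ψ - (c : ℂ) * (inner ℂ (ψ : H) (φ : H) : ℂ) = (inner ℂ (Q ψ) (Q φ) : ℂ)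

/-- The graph of a partially defined operator. -/
def graphOf (Q : ↥D →ₗ[ℂ] K) : Set (H × K) :=
  Set.range fun φ : ↥D => ((φ : H), Q φ)

/-- `Q` is a closed operator. -/
def OpClosed (Q : ↥D →ₗ[ℂ] K) : Prop := IsClosed (graphOf Q)

/-- `Q` is closable: the closure of its graph is again a graph. -/
def OpClosable (Q : ↥D →ₗ[ℂ] K) : Prop :=
  ∀ k : K, ((0 : H), k) ∈ closure (graphOf Q) → k = 0

/-- `Q` is singular: `ran Q ⊆ mul Q**`, equivalently every `(φ,0)` with `φ ∈ dom Q`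
belongs to the closure of the graph. -/
def OpSingular (Q : ↥D →ₗ[ℂ] K) : Prop :=
  ∀ φ : ↥D, ((φ : H), (0 : K)) ∈ closure (graphOf Q)

/-- `φ n →_t x` : convergence in `H` together with `t[φ_n - φ_m] → 0`. -/
def TConv (t : Form D) (φ : ℕ → ↥D) (x : H) : Prop :=
  Tendsto (fun n => (φ n : H)) atTop (nhds x) ∧
    Tendsto (fun p : ℕ × ℕ => t (φ p.1 - φ p.2) (φ p.1 - φ p.2)) (atTop ×ˢ atTop) (nhds 0)

/-- The form `t` is closable. -/
def FormClosable (t : Form D) : Prop :=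
  ∀ φ : ℕ → ↥D, TConv t φ 0 → Tendsto (fun n => t (φ n) (φ n)) atTop (nhds 0)

/-- The form `t` is closed. -/
def FormClosed (t : Form D) : Prop :=
  ∀ (φ : ℕ → ↥D) (x : H), TConv t φ x →
    ∃ hx : x ∈ D, Tendsto (fun n => t (φ n - ⟨x, hx⟩) (φ n - ⟨x, hx⟩)) atTop (nhds 0)

/-- The (nonnegative) form `t` is singular. -/
def FormSingular (t : Form D) : Prop :=
  ∀ ψ : ↥D, ∃ φ : ℕ → ↥D,
    Tendsto (fun n => (φ n : H)) atTop (nhds (ψ : H)) ∧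
      Tendsto (fun n => t (φ n) (φ n)) atTop (nhds 0)

end Defs

section Defs2

variable [NormedAddCommGroup H] [InnerProductSpace ℂ H]

/-- Order on forms: `t₁ ≤ t₂` iff `dom t₂ ⊆ dom t₁` and `t₁[φ] ≤ t₂[φ]` on `dom t₂`. -/
def FormLE {D₁ D₂ : Submodule ℂ H} (t₁ : Form D₁) (t₂ : Form D₂) : Prop :=
  ∃ h : D₂ ≤ D₁, ∀ φ : ↥D₂, t₁ ⟨(φ : H), h φ.2⟩ ⟨(φ : H), h φ.2⟩ ≤ t₂ φ φ

/-- `s` is an extension of the form `t` (`t ⊂ s`). -/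
def FormExtends {D₁ D₂ : Submodule ℂ H} (s : Form D₂) (t : Form D₁) : Prop :=
  ∃ h : D₁ ≤ D₂, ∀ φ ψ : ↥D₁, s ⟨(φ : H), h φ.2⟩ ⟨(ψ : H), h ψ.2⟩ = t φ ψ

/-- `r` is the regular part of `s` : a closable semibounded form below `s`
which dominates every closable semibounded form below `s`. -/
def IsRegularPart {D : Submodule ℂ H} (s r : Form D) : Prop :=
  FormClosable r ∧ (∃ c, BddBelowBy r c) ∧ FormLE r s ∧
    ∀ (Du : Submodule ℂ H) (u : Form Du), FormClosable u → (∃ cu, BddBelowBy u cu) →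
      FormLE u s → FormLE u r

end Defs2

section Rel

variable [NormedAddCommGroup H] [InnerProductSpace ℂ H]
  [NormedAddCommGroup K] [InnerProductSpace ℂ K] {D : Submodule ℂ H}

/-- A symmetric relation in `H`: `⟨φ',ψ⟩ = ⟨φ,ψ'⟩` for all members. -/
def IsSymmRel (R : Set (H × H)) : Prop :=
  ∀ p ∈ R, ∀ q ∈ R, (inner ℂ q.1 p.2 : ℂ) = (inner ℂ q.2 p.1 : ℂ)

/-- The adjoint of a linear relation in `H`. -/
def adjRelSet (R : Set (H × H)) : Set (H × H) :=
  {q | ∀ p ∈ R, (inner ℂ q.1 p.2 : ℂ) = (inner ℂ q.2 p.1 : ℂ)}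

/-- The relation `Q*Q + c` in `H`. -/
def StRel (Q : ↥D →ₗ[ℂ] K) (c : ℝ) : Set (H × H) :=
  {p | ∃ h : p.1 ∈ D, ∀ ψ : ↥D,
    (inner ℂ (Q ψ) (Q ⟨p.1, h⟩) : ℂ) = (inner ℂ (ψ : H) (p.2 - (c : ℂ) • p.1) : ℂ)}

/-- The relation `Q*Q** + c` in `H`, where `Q**` is the closure of the graph of `Q`. -/
def ARel (Q : ↥D →ₗ[ℂ] K) (c : ℝ) : Set (H × H) :=
  {p | ∃ g : K, (p.1, g) ∈ closure (graphOf Q) ∧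
    ∀ ψ : ↥D, (inner ℂ (Q ψ) g : ℂ) = (inner ℂ (ψ : H) (p.2 - (c : ℂ) • p.1) : ℂ)}

end Rel

/-! Since `t[φ] = ‖Qφ‖²`, a sequence `φₙ → φ` in `dom t` has `t[φₙ] → 0` exactly when
`Qφₙ → 0`, i.e. exactly when its graph points converge to `(φ, 0)`; so both notions of
singularity agree. Along such a sequence for `φ ≠ 0` the Rayleigh quotients tend to `0`, while
`t ≥ 0` makes `0` a lower bound for them. -/

section Singular

variable [NormedAddCommGroup H] [InnerProductSpace ℂ H]
  [NormedAddCommGroup K] [InnerProductSpace ℂ K] {D : Submodule ℂ H}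

theorem mem_closure_graphOf_iff {Q : ↥D →ₗ[ℂ] K} {x : H} {k : K} :
    (x, k) ∈ closure (graphOf Q) ↔ ∃ φ : ℕ → ↥D,
      Tendsto (fun n => (φ n : H)) atTop (𝓝 x) ∧ Tendsto (fun n => Q (φ n)) atTop (𝓝 k) := by
  simp only [mem_closure_iff_seq_limit, graphOf, Set.mem_range]
  constructor
  · rintro ⟨p, hp, hlim⟩
    choose φ hφ using hp
    obtain rfl : p = fun n => ((φ n : H), Q (φ n)) := funext fun n => (hφ n).symm
    exact ⟨φ, hlim.fst_nhds, hlim.snd_nhds⟩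
  · rintro ⟨φ, hx, hk⟩
    exact ⟨fun n => ((φ n : H), Q (φ n)), fun n => ⟨φ n, rfl⟩, hx.prodMk_nhds hk⟩

theorem IsRepMap.apply_self {t : Form D} {c : ℝ} {Q : ↥D →ₗ[ℂ] K} (hQ : IsRepMap t c Q)
    (φ : ↥D) : t φ φ = ((c * ‖(φ : H)‖ ^ 2 + ‖Q φ‖ ^ 2 : ℝ) : ℂ) := by
  have h := hQ φ φ
  rw [inner_self_eq_norm_sq_to_K, inner_self_eq_norm_sq_to_K] at h
  push_cast
  linear_combination h

theorem IsRepMap.tendsto_apply_self_zero_iff {t : Form D} {Q : ↥D →ₗ[ℂ] K}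
    (hQ : IsRepMap t 0 Q) (φ : ℕ → ↥D) :
    Tendsto (fun n => t (φ n) (φ n)) atTop (𝓝 0) ↔
      Tendsto (fun n => Q (φ n)) atTop (𝓝 0) := by
  simp only [hQ.apply_self, zero_mul, zero_add, ← Complex.ofReal_zero, tendsto_ofReal_iff,
    tendsto_zero_iff_norm_tendsto_zero (f := fun n => Q (φ n))]
  constructor
  · intro h
    simpa using h.sqrt
  · intro h
    simpa using h.pow 2

theorem IsRepMap.formSingular_iff_opSingular {t : Form D} {Q : ↥D →ₗ[ℂ] K}
    (hQ : IsRepMap t 0 Q) : FormSingular t ↔ OpSingular Q := by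
  simp only [FormSingular, OpSingular, mem_closure_graphOf_iff, hQ.tendsto_apply_self_zero_iff]

theorem BddBelowBy.mem_lowerBounds_rayleighSet {t : Form D} {c : ℝ} (ht : BddBelowBy t c) :
    c ∈ lowerBounds (rayleighSet t) := by
  rintro r ⟨φ, hφ, rfl⟩
  rw [le_div_iff₀ (by positivity)]
  exact (Complex.le_def.mp (ht φ)).1

theorem FormSingular.zero_mem_closure_rayleighSet {t : Form D} (ht : FormSingular t)
    {φ₀ : ↥D} (hφ₀ : (φ₀ : H) ≠ 0) : (0 : ℝ) ∈ closure (rayleighSet t) := by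
  obtain ⟨φ, hφ, htφ⟩ := ht φ₀
  have hquot : Tendsto (fun n => (t (φ n) (φ n)).re / ‖(φ n : H)‖ ^ 2) atTop (𝓝 0) := by
    simpa [Function.comp_def, Pi.div_def] using
      (Complex.continuous_re.tendsto 0 |>.comp htφ).div (hφ.norm.pow 2) (by positivity)
  refine mem_closure_of_tendsto hquot ?_
  filter_upwards [hφ.eventually_ne hφ₀] with n hn using ⟨φ n, hn, rfl⟩

end Singular

/-- a nonnegative form `t` is singular iff its representing map `Q` is a
singular operator; in that case `m(t) = 0`. -/
theorem statement5 [NormedAddCommGroup H] [InnerProductSpace ℂ H]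
    [NormedAddCommGroup K] [InnerProductSpace ℂ K]
    {D : Submodule ℂ H} (t : Form D)
    (hbdd : BddBelowBy t 0) (Q : ↥D →ₗ[ℂ] K) (hQ : IsRepMap t 0 Q) :
    (FormSingular t ↔ OpSingular Q) ∧
      (FormSingular t → (∃ φ : ↥D, (φ : H) ≠ 0) → IsGLB (rayleighSet t) 0) :=
  ⟨hQ.formSingular_iff_opSingular, fun hs ⟨_, hφ₀⟩ =>
    isGLB_of_mem_closure hbdd.mem_lowerBounds_rayleighSet (hs.zero_mem_closure_rayleighSet hφ₀)⟩
end
end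

section
/- If a nonnegative form t on H is both closable and singular, then t = 0 on its domain (i.e., t[φ,ψ] = 0 for all φ,ψ ∈ dom t). -/
open Filter Topology
open scoped ComplexOrder

noncomputable section

variable {H K K' : Type*}

/-!
Given `φ ∈ dom t`, singularity yields `fₙ → φ` with `t[fₙ] → 0`. By the parallelogram bound
`t[x - y] ≤ 2 t[x] + 2 t[y]`, the sequence `gₙ = fₙ - φ` is `t`-Cauchy and tends to `0`, so
closability gives `t[gₙ] → 0`; since `φ = fₙ - gₙ`, the same bound forces `t[φ] = 0`.
A complex sesquilinear form vanishing on the diagonal vanishes identically.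
-/

namespace LinearMap

section Alternating

variable {M N : Type*} [AddCommGroup M] [Module ℂ M] [AddCommGroup N] [Module ℂ N]

theorem IsAlt.eq_zero_of_conj {B : M →ₗ[ℂ] M →ₗ⋆[ℂ] N} (hB : B.IsAlt) : B = 0 := by
  ext x y
  have hswap : B x y = B y x := by
    simpa [Complex.conj_I] using hB.neg x (Complex.I • y)
  have h := hB.neg x y
  rw [← hswap, neg_eq_iff_add_eq_zero, ← two_smul ℂ, smul_eq_zero] at h
  simpa using h

end Alternating

section Nonneg

variable {M : Type*} [AddCommGroup M] [Module ℂ M] {B : M →ₗ[ℂ] M →ₗ⋆[ℂ] ℂ}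

theorem apply_sub_sub_add_apply_add_add (B : M →ₗ[ℂ] M →ₗ⋆[ℂ] ℂ) (x y : M) :
    B (x - y) (x - y) + B (x + y) (x + y) = 2 * B x x + 2 * B y y := by
  simp only [map_sub, map_add, sub_apply, add_apply]
  ring

theorem IsNonneg.norm_apply_sub_sub_le (hB : B.IsNonneg) (x y : M) :
    ‖B (x - y) (x - y)‖ ≤ 2 * ‖B x x‖ + 2 * ‖B y y‖ :=
  calc ‖B (x - y) (x - y)‖ ≤ ‖2 * B x x + 2 * B y y‖ := by
        refine CStarAlgebra.norm_le_norm_of_nonneg_of_le (hB.nonneg _) ?_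
        rw [← apply_sub_sub_add_apply_add_add]
        exact le_add_of_nonneg_right (hB.nonneg _)
    _ ≤ 2 * ‖B x x‖ + 2 * ‖B y y‖ := by
        simpa using norm_add_le (2 * B x x) (2 * B y y)

theorem IsNonneg.tendsto_apply_sub_sub {ι : Type*} {l : Filter ι} (hB : B.IsNonneg)
    {u v : ι → M} (hu : Tendsto (fun i ↦ B (u i) (u i)) l (𝓝 0))
    (hv : Tendsto (fun i ↦ B (v i) (v i)) l (𝓝 0)) :
    Tendsto (fun i ↦ B (u i - v i) (u i - v i)) l (𝓝 0) := by
  refine squeeze_zero_norm (fun i ↦ hB.norm_apply_sub_sub_le (u i) (v i)) ?_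
  simpa using (hu.norm.const_mul 2).add (hv.norm.const_mul 2)

end Nonneg

end LinearMap

section Forms

variable [NormedAddCommGroup H] [InnerProductSpace ℂ H] {D : Submodule ℂ H} {t : Form D}

theorem BddBelowBy.isNonneg (h : BddBelowBy t 0) : t.IsNonneg :=
  LinearMap.isNonneg_def.2 fun φ ↦ by simpa using h φ

theorem LinearMap.IsNonneg.tConv_sub (ht : t.IsNonneg) {f : ℕ → ↥D} {φ : ↥D}
    (hf : Tendsto (fun n ↦ (f n : H)) atTop (𝓝 (φ : H)))
    (hft : Tendsto (fun n ↦ t (f n) (f n)) atTop (𝓝 0)) :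
    TConv t (fun n ↦ f n - φ) 0 := by
  refine ⟨by simpa using hf.sub_const (φ : H), ?_⟩
  simpa using ht.tendsto_apply_sub_sub (hft.comp tendsto_fst) (hft.comp tendsto_snd)

theorem FormClosable.isAlt_of_formSingular (ht : t.IsNonneg) (hcl : FormClosable t)
    (hsing : FormSingular t) : t.IsAlt := by
  intro φ
  obtain ⟨f, hf, hft⟩ := hsing φ
  have hgt : Tendsto (fun n ↦ t (f n - φ) (f n - φ)) atTop (𝓝 0) :=
    hcl _ (ht.tConv_sub hf hft)
  simpa using ht.tendsto_apply_sub_sub hft hgt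

end Forms

/-- a nonnegative form which is both closable and singular vanishes
identically on its domain. -/
theorem statement6 [NormedAddCommGroup H] [InnerProductSpace ℂ H]
    {D : Submodule ℂ H} (t : Form D)
    (hbdd : BddBelowBy t 0) (hcl : FormClosable t) (hsing : FormSingular t) :
    ∀ φ ψ : ↥D, t φ ψ = 0 := by
  intro φ ψ
  rw [(hcl.isAlt_of_formSingular hbdd.isNonneg hsing).eq_zero_of_conj]
  rfl
end
end

section
/- Let t be a semibounded closable form on H, and let b be a symmetric form with dom t ⊂ dom b and |b[φ]| ≤ α‖φ‖² for all φ ∈ dom t and some α ≥ 0. Then (t + b)_reg = t_reg + b and (t + b)_sing = t_sing, where subscripts reg, sing denote the components in the Lebesgue decomposition. -/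
open Filter Topology
open scoped ComplexOrder

noncomputable section

variable {H K K' : Type*}

/-!
Adding a bounded symmetric form `p` preserves closability and semiboundedness, since `p[φ_n] → 0`
whenever `φ_n → 0` in `H`. Hence `u ↦ u + p` matches the closable semibounded forms below `s`
with those below `s + p` (a form `u ≤ s + p` on a larger domain is first restricted to `dom s`),
and sends the largest one, `s_reg`, to `(s + p)_reg`. Regular parts are unique by polarization,
so the singular parts `s - s_reg` and `(s + p) - (s + p)_reg` coincide.
-/

section BoundedPerturbation

variable [NormedAddCommGroup H] [InnerProductSpace ℂ H] {D : Submodule ℂ H}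

lemma Form.eq_zero_of_apply_self_eq_zero (s : Form D) (hs : ∀ φ : ↥D, s φ φ = 0) :
    s = 0 := by
  ext φ ψ
  have conj_linear : ∀ χ ξ : ↥D, s χ (Complex.I • ξ) = -Complex.I * s χ ξ := fun χ ξ => by
    rw [LinearMap.map_smulₛₗ, smul_eq_mul, Complex.conj_I, neg_mul]
  have linear : ∀ χ ξ : ↥D, s (Complex.I • χ) ξ = Complex.I * s χ ξ := fun χ ξ => by
    rw [map_smul, LinearMap.smul_apply, smul_eq_mul]
  have h₁ := hs (φ + ψ)
  have h₂ := hs (φ + Complex.I • ψ)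
  simp only [map_add, LinearMap.add_apply] at h₁ h₂
  rw [hs φ, hs ψ] at h₁
  rw [hs φ, conj_linear, conj_linear, linear, linear, hs ψ, mul_zero] at h₂
  rw [LinearMap.zero_apply, LinearMap.zero_apply]
  linear_combination (h₁ + Complex.I * h₂) / 2 + ((s φ ψ - s ψ φ) / 2) * Complex.I_sq

lemma Form.ext_of_apply_self {s s' : Form D} (h : ∀ φ : ↥D, s φ φ = s' φ φ) : s = s' :=
  sub_eq_zero.mp <| Form.eq_zero_of_apply_self_eq_zero _ fun φ => sub_eq_zero.mpr (h φ)

def restrictForm {D₁ D₂ : Submodule ℂ H} (h : D₁ ≤ D₂) (u : Form D₂) : Form D₁ :=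
  (u ∘ₗ Submodule.inclusion h).compl₂ (Submodule.inclusion h)

@[simp]
lemma restrictForm_apply {D₁ D₂ : Submodule ℂ H} (h : D₁ ≤ D₂) (u : Form D₂) (φ ψ : ↥D₁) :
    restrictForm h u φ ψ = u (Submodule.inclusion h φ) (Submodule.inclusion h ψ) := rfl

lemma FormClosable.restrict {D₁ D₂ : Submodule ℂ H} (h : D₁ ≤ D₂) {u : Form D₂}
    (hu : FormClosable u) : FormClosable (restrictForm h u) := by
  rintro φ ⟨hφ, hΔ⟩
  refine hu (Submodule.inclusion h ∘ φ) ⟨hφ, ?_⟩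
  simp only [Function.comp_apply, ← map_sub]
  exact hΔ

lemma BddBelowBy.restrict {D₁ D₂ : Submodule ℂ H} (h : D₁ ≤ D₂) {u : Form D₂} {c : ℝ}
    (hu : BddBelowBy u c) : BddBelowBy (restrictForm h u) c :=
  fun φ => hu (Submodule.inclusion h φ)

lemma FormLE.apply_self_le {s s' : Form D} (h : FormLE s s') (φ : ↥D) : s φ φ ≤ s' φ φ :=
  h.2 φ

/-- Real diagonal values mean `p` is symmetric; they are needed to compare `p[φ]` with reals
in the complex order. -/
def FormBoundedBy (p : Form D) (α : ℝ) : Prop :=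
  ∀ φ : ↥D, (p φ φ).im = 0 ∧ ‖p φ φ‖ ≤ α * ‖(φ : H)‖ ^ 2

namespace FormBoundedBy

variable {p : Form D} {α : ℝ}

lemma neg (hp : FormBoundedBy p α) : FormBoundedBy (-p) α := fun φ => by
  simpa only [LinearMap.neg_apply, Complex.neg_im, neg_eq_zero, norm_neg] using hp φ

lemma neg_le (hp : FormBoundedBy p α) (φ : ↥D) :
    (↑(-(α * ‖(φ : H)‖ ^ 2)) : ℂ) ≤ p φ φ := by
  obtain ⟨him, hnorm⟩ := hp φ
  rw [Complex.le_def, Complex.ofReal_re, Complex.ofReal_im, him]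
  exact ⟨by linarith [neg_abs_le (p φ φ).re, Complex.abs_re_le_norm (p φ φ)], rfl⟩

lemma tendsto_apply_self {ι : Type*} {l : Filter ι} (hp : FormBoundedBy p α) {φ : ι → ↥D}
    (hφ : Tendsto (fun i => (φ i : H)) l (𝓝 0)) :
    Tendsto (fun i => p (φ i) (φ i)) l (𝓝 0) := by
  have hbound : Tendsto (fun i => α * ‖(φ i : H)‖ ^ 2) l (𝓝 0) := by
    simpa using (hφ.norm.pow 2).const_mul α
  exact squeeze_zero_norm (fun i => (hp (φ i)).2) hbound

lemma tconv_zero_of_add (hp : FormBoundedBy p α) {s : Form D} {φ : ℕ → ↥D}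
    (h : TConv (s + p) φ 0) : TConv s φ 0 := by
  obtain ⟨hφ, hΔ⟩ := h
  refine ⟨hφ, ?_⟩
  have hdiff :
      Tendsto (fun n : ℕ × ℕ => ((φ n.1 - φ n.2 : ↥D) : H)) (atTop ×ˢ atTop) (𝓝 0) := by
    simpa using (hφ.comp tendsto_fst).sub (hφ.comp tendsto_snd)
  simpa using hΔ.sub (hp.tendsto_apply_self hdiff)

lemma formClosable_add (hp : FormBoundedBy p α) {s : Form D} (hs : FormClosable s) :
    FormClosable (s + p) := fun φ h => by
  simpa using (hs φ (hp.tconv_zero_of_add h)).add (hp.tendsto_apply_self h.1)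

lemma bddBelowBy_add (hp : FormBoundedBy p α) {s : Form D} {c : ℝ} (hs : BddBelowBy s c) :
    BddBelowBy (s + p) (c - α) := fun φ =>
  calc (↑((c - α) * ‖(φ : H)‖ ^ 2) : ℂ)
      = ↑(c * ‖(φ : H)‖ ^ 2) + ↑(-(α * ‖(φ : H)‖ ^ 2)) := by push_cast; ring
    _ ≤ s φ φ + p φ φ := add_le_add (hs φ) (hp.neg_le φ)

lemma isRegularPart_add (hp : FormBoundedBy p α) {s r : Form D} (hr : IsRegularPart s r) :
    IsRegularPart (s + p) (r + p) := by
  obtain ⟨hrcl, ⟨c, hrc⟩, hrs, hrmax⟩ := hr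
  refine ⟨hp.formClosable_add hrcl, ⟨c - α, hp.bddBelowBy_add hrc⟩,
    ⟨le_rfl, fun φ => add_le_add_left (hrs.apply_self_le φ) _⟩, ?_⟩
  rintro Du u hucl ⟨cu, hucu⟩ ⟨hD, hus⟩
  obtain ⟨_, hur⟩ := hrmax D (restrictForm hD u + -p)
    (hp.neg.formClosable_add (hucl.restrict hD)) ⟨cu - α, hp.neg.bddBelowBy_add (hucu.restrict hD)⟩
    ⟨le_rfl, fun φ => by
      simpa [← sub_eq_add_neg, sub_le_iff_le_add, Submodule.inclusion_apply] using hus φ⟩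
  exact ⟨hD, fun φ => by
    simpa [← sub_eq_add_neg, sub_le_iff_le_add, Submodule.inclusion_apply] using hur φ⟩

end FormBoundedBy

lemma IsRegularPart.unique {s r₁ r₂ : Form D} (h₁ : IsRegularPart s r₁)
    (h₂ : IsRegularPart s r₂) : r₁ = r₂ := by
  have h₁₂ := h₂.2.2.2 D r₁ h₁.1 h₁.2.1 h₁.2.2.1
  have h₂₁ := h₁.2.2.2 D r₂ h₂.1 h₂.2.1 h₂.2.2.1
  exact Form.ext_of_apply_self fun φ => le_antisymm (h₁₂.apply_self_le φ) (h₂₁.apply_self_le φ)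

end BoundedPerturbation

theorem statement10_general [NormedAddCommGroup H] [InnerProductSpace ℂ H]
    {D Db : Submodule ℂ H} (t : Form D)
    (b : Form Db) (hDb : D ≤ Db)
    (hbsym : ∀ φ ψ : ↥Db, b φ ψ = (starRingEnd ℂ) (b ψ φ))
    (α : ℝ)
    (hbbdd : ∀ φ : ↥D,
      ‖b ⟨(φ : H), hDb φ.2⟩ ⟨(φ : H), hDb φ.2⟩‖ ≤ α * ‖(φ : H)‖ ^ 2)
    (tpb : Form D)
    (htpb : ∀ φ ψ : ↥D, tpb φ ψ = t φ ψ + b ⟨(φ : H), hDb φ.2⟩ ⟨(ψ : H), hDb ψ.2⟩)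
    (r : Form D) (hr : IsRegularPart t r)
    (rb : Form D)
    (hrb : ∀ φ ψ : ↥D, rb φ ψ = r φ ψ + b ⟨(φ : H), hDb φ.2⟩ ⟨(ψ : H), hDb ψ.2⟩) :
    IsRegularPart tpb rb ∧
      ∀ r' : Form D, IsRegularPart tpb r' →
        ∀ φ ψ : ↥D, tpb φ ψ - r' φ ψ = t φ ψ - r φ ψ := by
  have hb : FormBoundedBy (restrictForm hDb b) α := fun φ =>
    ⟨Complex.conj_eq_iff_im.mp (hbsym _ _).symm, hbbdd φ⟩
  obtain rfl : tpb = t + restrictForm hDb b := LinearMap.ext₂ htpb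
  obtain rfl : rb = r + restrictForm hDb b := LinearMap.ext₂ hrb
  have hreg := hb.isRegularPart_add hr
  refine ⟨hreg, fun r' hr' φ ψ => ?_⟩
  rw [← hreg.unique hr']
  simp only [LinearMap.add_apply, add_sub_add_right_eq_sub]

/-- bounded symmetric perturbations: `(t+b)_reg = t_reg + b` and
`(t+b)_sing = t_sing`. -/
theorem statement10 [NormedAddCommGroup H] [InnerProductSpace ℂ H] [CompleteSpace H]
    {D Db : Submodule ℂ H} (t : Form D)
    (ht : ∃ c, BddBelowBy t c) (htcl : FormClosable t)
    (b : Form Db) (hDb : D ≤ Db)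
    (hbsym : ∀ φ ψ : ↥Db, b φ ψ = (starRingEnd ℂ) (b ψ φ))
    (α : ℝ) (hα : 0 ≤ α)
    (hbbdd : ∀ φ : ↥D,
      ‖b ⟨(φ : H), hDb φ.2⟩ ⟨(φ : H), hDb φ.2⟩‖ ≤ α * ‖(φ : H)‖ ^ 2)
    (tpb : Form D)
    (htpb : ∀ φ ψ : ↥D, tpb φ ψ = t φ ψ + b ⟨(φ : H), hDb φ.2⟩ ⟨(ψ : H), hDb ψ.2⟩)
    (r : Form D) (hr : IsRegularPart t r)
    (rb : Form D)
    (hrb : ∀ φ ψ : ↥D, rb φ ψ = r φ ψ + b ⟨(φ : H), hDb φ.2⟩ ⟨(ψ : H), hDb ψ.2⟩) :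
    IsRegularPart tpb rb ∧
      ∀ r' : Form D, IsRegularPart tpb r' →
        ∀ φ ψ : ↥D, tpb φ ψ - r' φ ψ = t φ ψ - r φ ψ :=
  statement10_general t b hDb hbsym α hbbdd tpb htpb r hr rb hrb
end
end

section
/- Let h be a nonnegative form on H with representing map Q : dom h → K, and suppose h = h₁ + h₂ with h₁, h₂ nonnegative forms on dom h. Then there exists a nonnegative contraction K₀ ∈ B(K) such that h₁[φ,ψ] = ⟨(I−K₀)^{1/2}Qφ, (I−K₀)^{1/2}Qψ⟩ and h₂[φ,ψ] = ⟨K₀^{1/2}Qφ, K₀^{1/2}Qψ⟩ for all φ,ψ ∈ dom h. If moreover ran Q is dense in K, this contraction K₀ is unique. -/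
open Filter Topology
open scoped ComplexOrder

noncomputable section

variable {H K K' : Type*}

/-! The form `h₂` is dominated by `h = ‖Q·‖²`, so by Cauchy–Schwarz `|h₂[φ,ψ]| ≤ ‖Qφ‖‖Qψ‖`.
Hence `h₂` descends to a bounded sesquilinear form on `ran Q`, which extends to its closure `M`
and is represented there, via Riesz, by an operator `0 ≤ T ≤ 1`; `K₀` is `T` compressed by the
orthogonal projection onto `M`. Then `h₁ = h - h₂` is represented by `1 - K₀`. Uniqueness holds
because `⟪K₀ Qψ, Qφ⟫ = h₂[φ,ψ]` pins `K₀` down on a dense set. -/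

open scoped InnerProductSpace

section SesquilinearForm

variable {E : Type*} [AddCommGroup E] [Module ℂ E] (t : E →ₗ[ℂ] E →ₗ⋆[ℂ] ℂ)

theorem conj_apply_swap_of_nonneg (ht : ∀ x, 0 ≤ t x x) (x y : E) :
    starRingEnd ℂ (t y x) = t x y := by
  have him : ∀ z, (t z z).im = 0 := fun z => (Complex.nonneg_iff.mp (ht z)).2.symm
  have h₁ := him (x + y)
  have h₂ := him (x + Complex.I • y)
  simp only [map_add, map_smul, map_smulₛₗ, LinearMap.add_apply, LinearMap.smul_apply,
    smul_eq_mul, Complex.add_re, Complex.add_im, Complex.mul_re, Complex.mul_im, him x, him y,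
    Complex.conj_I, Complex.neg_re, Complex.neg_im, Complex.I_re, Complex.I_im] at h₁ h₂
  apply Complex.ext <;> simp <;> linarith

theorem norm_apply_sq_le_of_nonneg (ht : ∀ x, 0 ≤ t x x) (x y : E) :
    ‖t x y‖ ^ 2 ≤ (t x x).re * (t y y).re := by
  let c : PreInnerProductSpace.Core ℂ E :=
    { inner := fun x y => t y x
      conj_inner_symm := fun x y => conj_apply_swap_of_nonneg t ht y x
      re_inner_nonneg := fun x => (Complex.nonneg_iff.mp (ht x)).1
      add_left := fun x y z => by simp
      smul_left := fun x y r => by simp }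
  have hcs : ‖t x y‖ * ‖t y x‖ ≤ (t y y).re * (t x x).re :=
    @InnerProductSpace.Core.inner_mul_inner_self_le ℂ E _ _ _ c y x
  rw [← conj_apply_swap_of_nonneg t ht y x, Complex.norm_conj] at hcs
  linarith

theorem norm_apply_le_of_le_norm_sq {F : Type*} [SeminormedAddCommGroup F] [Module ℂ F]
    (V : E →ₗ[ℂ] F) (h0 : ∀ x, 0 ≤ t x x) (h1 : ∀ x, t x x ≤ (‖V x‖ : ℂ) ^ 2) (x y : E) :
    ‖t x y‖ ≤ ‖V x‖ * ‖V y‖ := by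
  have hre : ∀ z, (t z z).re ≤ ‖V z‖ ^ 2 := fun z => by
    simpa [← Complex.ofReal_pow] using (Complex.le_def.mp (h1 z)).1
  have hre0 : ∀ z, 0 ≤ (t z z).re := fun z => (Complex.nonneg_iff.mp (h0 z)).1
  refine (pow_le_pow_iff_left₀ (norm_nonneg _) (by positivity) two_ne_zero).mp ?_
  calc ‖t x y‖ ^ 2 ≤ (t x x).re * (t y y).re := norm_apply_sq_le_of_nonneg t h0 x y
    _ ≤ ‖V x‖ ^ 2 * ‖V y‖ ^ 2 := mul_le_mul (hre x) (hre y) (hre0 y) (sq_nonneg _)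
    _ = (‖V x‖ * ‖V y‖) ^ 2 := by ring

end SesquilinearForm

section RepresentingOperator

variable [NormedAddCommGroup K] [InnerProductSpace ℂ K]

namespace ContinuousLinearMap

theorem isPositive_of_forall_inner_nonneg {T : K →L[ℂ] K} (h : ∀ z, 0 ≤ ⟪T z, z⟫_ℂ) :
    T.IsPositive :=
  (T.isPositive_iff).2 ⟨(LinearMap.isSymmetric_iff_inner_map_self_real _).2 fun z =>
    Complex.conj_eq_iff_im.2 (Complex.nonneg_iff.mp (h z)).2.symm, h⟩

theorem isPositive_one_sub_of_forall_inner_le {T : K →L[ℂ] K}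
    (h : ∀ z, ⟪T z, z⟫_ℂ ≤ (‖z‖ : ℂ) ^ 2) : (1 - T).IsPositive :=
  isPositive_of_forall_inner_nonneg fun z => by
    rw [sub_apply, one_apply_eq_self, inner_sub_left, inner_self_eq_norm_sq_to_K, sub_nonneg]
    exact h z

theorem IsPositive.inner_map_map_of_mul_self_eq {S T : K →L[ℂ] K} (hS : S.IsPositive)
    (hST : S * S = T) (x y : K) : ⟪S x, S y⟫_ℂ = ⟪T x, y⟫_ℂ := by
  rw [← hST]
  exact (hS.inner_left_eq_inner_right (S x) y).symm

theorem IsPositive.exists_isPositive_mul_self_eq [CompleteSpace K] {T : K →L[ℂ] K}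
    (hT : T.IsPositive) : ∃ S : K →L[ℂ] K, S.IsPositive ∧ S * S = T :=
  ⟨CFC.sqrt T, (nonneg_iff_isPositive _).1 (CFC.sqrt_nonneg T),
    CFC.sqrt_mul_sqrt_self T ((nonneg_iff_isPositive _).2 hT)⟩

end ContinuousLinearMap

variable {E : Type*} [AddCommGroup E] [Module ℂ E] {V : E →ₗ[ℂ] K}

theorem eq_of_forall_inner_map_eq (hV : DenseRange V) {a b : K}
    (h : ∀ x, ⟪a, V x⟫_ℂ = ⟪b, V x⟫_ℂ) : a = b :=
  ext_inner_right ℂ fun z => hV.induction_on z (isClosed_eq (by fun_prop) (by fun_prop)) h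

theorem ContinuousLinearMap.ext_of_inner_map_map (hV : DenseRange V) {T T' : K →L[ℂ] K}
    (h : ∀ x y, ⟪T (V y), V x⟫_ℂ = ⟪T' (V y), V x⟫_ℂ) : T = T' := by
  ext z
  exact hV.induction_on z (isClosed_eq (by fun_prop) (by fun_prop))
    fun y => eq_of_forall_inner_map_eq hV (h · y)

theorem forall_inner_nonneg_le_of_denseRange (hV : DenseRange V) {T : K →L[ℂ] K}
    (hT : ∀ x, 0 ≤ ⟪T (V x), V x⟫_ℂ ∧ ⟪T (V x), V x⟫_ℂ ≤ (‖V x‖ : ℂ) ^ 2) (z : K) :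
    0 ≤ ⟪T z, z⟫_ℂ ∧ ⟪T z, z⟫_ℂ ≤ (‖z‖ : ℂ) ^ 2 := by
  refine hV.induction_on z ?_ hT
  rw [Set.ofPred_and]
  exact (isClosed_le (by fun_prop) (by fun_prop)).inter (isClosed_le (by fun_prop) (by fun_prop))

variable [CompleteSpace K]

theorem exists_clm_inner_map_map_eq_of_denseRange (hV : DenseRange V)
    (t : E →ₗ[ℂ] E →ₗ⋆[ℂ] ℂ) (ht : ∀ x y, ‖t x y‖ ≤ ‖V x‖ * ‖V y‖) :
    ∃ T : K →L[ℂ] K, ∀ x y, ⟪T (V y), V x⟫_ℂ = t x y := by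
  have hbound : ∀ y x, ‖t.flip y x‖ ≤ ‖V y‖ * ‖V x‖ := fun y x => by
    rw [mul_comm]; exact ht x y
  let ℓ : E → StrongDual ℂ K := fun y => (t.flip y).extendOfNorm V
  have hℓ : ∀ x y, ℓ y (V x) = t x y := fun x y =>
    LinearMap.extendOfNorm_eq hV ⟨_, hbound y⟩ x
  let R := (InnerProductSpace.toDual ℂ K).symm
  have hR : ∀ x y, ⟪R (ℓ y), V x⟫_ℂ = t x y := fun x y => by
    rw [InnerProductSpace.toDual_symm_apply, hℓ]
  let U : E →ₗ[ℂ] K :=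
    { toFun := fun y => R (ℓ y)
      map_add' := fun y y' => eq_of_forall_inner_map_eq hV fun x => by
        simp only [inner_add_left, hR, map_add]
      map_smul' := fun c y => eq_of_forall_inner_map_eq hV fun x => by
        simp only [inner_smul_left, hR, map_smulₛₗ, RingHom.id_apply, smul_eq_mul] }
  have hU : ∀ y, ‖U y‖ ≤ 1 * ‖V y‖ := fun y => by
    rw [one_mul]
    exact (R.norm_map _).trans_le
      (LinearMap.opNorm_extendOfNorm_le hV (norm_nonneg _) (hbound y))
  exact ⟨U.extendOfNorm V, fun x y => by rw [LinearMap.extendOfNorm_eq hV ⟨1, hU⟩]; exact hR x y⟩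

theorem exists_clm_inner_map_map_eq (t : E →ₗ[ℂ] E →ₗ⋆[ℂ] ℂ) (V : E →ₗ[ℂ] K)
    (h0 : ∀ x, 0 ≤ t x x) (h1 : ∀ x, t x x ≤ (‖V x‖ : ℂ) ^ 2) :
    ∃ T : K →L[ℂ] K, (∀ z, 0 ≤ ⟪T z, z⟫_ℂ ∧ ⟪T z, z⟫_ℂ ≤ (‖z‖ : ℂ) ^ 2) ∧
      ∀ x y, ⟪T (V y), V x⟫_ℂ = t x y := by
  set M := (LinearMap.range V).topologicalClosure
  let VM : E →ₗ[ℂ] M :=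
    V.codRestrict M fun x => (LinearMap.range V).le_topologicalClosure (LinearMap.mem_range_self V x)
  have hVM : DenseRange VM := by
    rw [DenseRange, Subtype.dense_iff, ← Set.range_comp]
    exact (Submodule.topologicalClosure_coe _).le
  obtain ⟨T, hT⟩ :=
    exists_clm_inner_map_map_eq_of_denseRange hVM t (norm_apply_le_of_le_norm_sq t V h0 h1)
  have hTM := forall_inner_nonneg_le_of_denseRange hVM (T := T) fun x => by
    rw [hT]; exact ⟨h0 x, h1 x⟩
  let P := M.orthogonalProjectionOnto
  refine ⟨M.subtypeL ∘L T ∘L P, fun z => ?_, fun x y => ?_⟩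
  · have hPz : (‖P z‖ : ℂ) ^ 2 ≤ (‖z‖ : ℂ) ^ 2 := by
      exact_mod_cast pow_le_pow_left₀ (norm_nonneg _) (M.norm_orthogonalProjectionOnto_apply_le z) 2
    have hTP : ⟪(M.subtypeL ∘L T ∘L P) z, z⟫_ℂ = ⟪T (P z), P z⟫_ℂ :=
      (M.inner_orthogonalProjectionOnto_eq_of_mem_left _ _).symm
    rw [hTP]
    exact ⟨(hTM (P z)).1, (hTM (P z)).2.trans hPz⟩
  · have hP : P (V y) = VM y := M.orthogonalProjectionOnto_mem_subspace_eq_self (VM y)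
    simp only [ContinuousLinearMap.comp_apply, hP, Submodule.subtypeL_apply]
    exact hT x y

end RepresentingOperator

/-- every sum decomposition `h = h₁ + h₂` into nonnegative forms arises
from a nonnegative contraction `K₀`, unique when `ran Q` is dense. -/
theorem statement12 [NormedAddCommGroup H] [InnerProductSpace ℂ H]
    [NormedAddCommGroup K] [InnerProductSpace ℂ K] [CompleteSpace K]
    {D : Submodule ℂ H} (h h₁ h₂ : Form D)
    (Q : ↥D →ₗ[ℂ] K) (hQ : IsRepMap h 0 Q)
    (hpos₁ : BddBelowBy h₁ 0) (hpos₂ : BddBelowBy h₂ 0)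
    (hsum : ∀ φ ψ : ↥D, h φ ψ = h₁ φ ψ + h₂ φ ψ) :
    ∃ K₀ : K →L[ℂ] K, K₀.IsPositive ∧ (1 - K₀).IsPositive ∧
      (∃ A B : K →L[ℂ] K, A.IsPositive ∧ B.IsPositive ∧
        A * A = 1 - K₀ ∧ B * B = K₀ ∧
        (∀ φ ψ : ↥D, h₁ φ ψ = (inner ℂ (A (Q ψ)) (A (Q φ)) : ℂ)) ∧
        (∀ φ ψ : ↥D, h₂ φ ψ = (inner ℂ (B (Q ψ)) (B (Q φ)) : ℂ))) ∧
      (Dense (Set.range fun φ : ↥D => Q φ) →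
        ∀ K₀' : K →L[ℂ] K, K₀'.IsPositive → (1 - K₀').IsPositive →
          (∃ A' B' : K →L[ℂ] K, A'.IsPositive ∧ B'.IsPositive ∧
            A' * A' = 1 - K₀' ∧ B' * B' = K₀' ∧
            (∀ φ ψ : ↥D, h₁ φ ψ = (inner ℂ (A' (Q ψ)) (A' (Q φ)) : ℂ)) ∧
            (∀ φ ψ : ↥D, h₂ φ ψ = (inner ℂ (B' (Q ψ)) (B' (Q φ)) : ℂ))) →
          K₀' = K₀) := by
  have hQh : ∀ φ ψ, ⟪Q ψ, Q φ⟫_ℂ = h₁ φ ψ + h₂ φ ψ := fun φ ψ => by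
    simpa [hsum] using (hQ φ ψ).symm
  have h₁_nonneg : ∀ φ, 0 ≤ h₁ φ φ := by simpa [BddBelowBy] using hpos₁
  have h₂_nonneg : ∀ φ, 0 ≤ h₂ φ φ := by simpa [BddBelowBy] using hpos₂
  have h₂_le : ∀ φ, h₂ φ φ ≤ (‖Q φ‖ : ℂ) ^ 2 := fun φ =>
    calc h₂ φ φ ≤ h₁ φ φ + h₂ φ φ := le_add_of_nonneg_left (h₁_nonneg φ)
      _ = (‖Q φ‖ : ℂ) ^ 2 := (hQh φ φ).symm.trans (inner_self_eq_norm_sq_to_K _)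
  obtain ⟨K₀, hK₀, hK₀Q⟩ := exists_clm_inner_map_map_eq h₂ Q h₂_nonneg h₂_le
  have hpos := ContinuousLinearMap.isPositive_of_forall_inner_nonneg fun z => (hK₀ z).1
  have hpos' := ContinuousLinearMap.isPositive_one_sub_of_forall_inner_le fun z => (hK₀ z).2
  obtain ⟨A, hA, hAA⟩ := hpos'.exists_isPositive_mul_self_eq
  obtain ⟨B, hB, hBB⟩ := hpos.exists_isPositive_mul_self_eq
  refine ⟨K₀, hpos, hpos', ⟨A, B, hA, hB, hAA, hBB, fun φ ψ => ?_, fun φ ψ => ?_⟩, ?_⟩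
  · rw [hA.inner_map_map_of_mul_self_eq hAA, sub_apply, one_apply_eq_self,
      inner_sub_left, hK₀Q, hQh, add_sub_cancel_right]
  · rw [hB.inner_map_map_of_mul_self_eq hBB, hK₀Q]
  · rintro hdense K₀' - - ⟨A', B', -, hB', -, hBB', -, h₂B'⟩
    refine ContinuousLinearMap.ext_of_inner_map_map hdense fun φ ψ => ?_
    rw [← hB'.inner_map_map_of_mul_self_eq hBB', ← h₂B', hK₀Q]
end
end

section
/- Let h be a nonnegative form with minimal representing map Q (ran Q dense in K), and let K₀ ∈ B(K) be a nonnegative contraction generating the sum decomposition h = h₁ + h₂ as h₁ = ‖(I−K₀)^{1/2}Q·‖², h₂ = ‖K₀^{1/2}Q·‖². Then the column representation φ ↦ ((I−K₀)^{1/2}Qφ, K₀^{1/2}Qφ) ∈ K₁ ⊕ K₂, where K₁ = closure of ran(I−K₀) and K₂ = closure of ran K₀, is a representing map for h, and it is minimal (dense range in K₁ ⊕ K₂) if and only if K₀ is an orthogonal projection. -/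
open Filter Topology
open scoped ComplexOrder

noncomputable section

variable {H K K' : Type*}

/-!
Write `K₀ = B²` and `1 - K₀ = A²`. Since `A² + B² = 1`, the column `W = (A, B) : K → K × K`
satisfies `‖A k‖² + ‖B k‖² = ‖k‖²`, so it is bounded below and has closed range; by density of
`ran Q` this range is the closure of `ran (W ∘ Q)`. It always lies in
`clos ran A × clos ran B = clos ran A² × clos ran B²`. If `K₀` is idempotent, the C⋆-identity
applied to `(AB)⋆(AB) = B A² B = K₀ - K₀²` gives `AB = BA = 0`, whence
`W (A u + B v) = (A² u, B² v)` and `ran W` is all of that product. Conversely, if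
`((1 - K₀) x, 0) = W k`, then `K₀ (1 - K₀) x = A B² k = 0` because `A` commutes with `B² = 1 - A²`.
-/

open ContinuousLinearMap InnerProduct Set

theorem DenseRange.closure_range_comp_of_isClosed_range {X Y Z : Type*} [TopologicalSpace Y]
    [TopologicalSpace Z] {f : Y → Z} {g : X → Y} (hf : Continuous f) (hg : DenseRange g)
    (hcl : IsClosed (range f)) : closure (range (f ∘ g)) = range f :=
  subset_antisymm (closure_minimal (range_comp_subset_range g f) hcl)
    (by rw [range_comp]; exact hf.range_subset_closure_image_dense hg)

section Algebra

variable {R : Type*} [NormedRing R] [StarRing R] [CStarRing R] {a b : R}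

theorem mul_eq_zero_of_isIdempotentElem_mul_self (ha : IsSelfAdjoint a) (hb : IsSelfAdjoint b)
    (hab : a * a + b * b = 1) (hp : IsIdempotentElem (b * b)) : a * b = 0 := by
  have haa : a * a = 1 - b * b := eq_sub_of_add_eq hab
  rw [← CStarRing.star_mul_self_eq_zero_iff, star_mul, ha.star_eq, hb.star_eq]
  calc b * a * (a * b) = b * b - b * b * (b * b) := by
        rw [mul_assoc, ← mul_assoc a, haa]; noncomm_ring
    _ = 0 := by rw [hp.eq, sub_self]

end Algebra

namespace ContinuousLinearMap

variable {𝕜 E F : Type*} [RCLike 𝕜] [NormedAddCommGroup E] [InnerProductSpace 𝕜 E] [CompleteSpace E]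
  [NormedAddCommGroup F] [InnerProductSpace 𝕜 F] [CompleteSpace F]

theorem topologicalClosure_range_comp_adjoint (T : E →L[𝕜] F) :
    (T ∘L T†).range.topologicalClosure = T.range.topologicalClosure :=
  calc (T ∘L T†).range.topologicalClosure = (T ∘L T†)†.range.topologicalClosure := by
        rw [adjoint_comp, adjoint_adjoint]
    _ = (T ∘L T†).kerᗮ := (orthogonal_ker _).symm
    _ = T†.kerᗮ := by rw [ker_self_comp_adjoint]
    _ = T.range.topologicalClosure := by rw [orthogonal_ker, adjoint_adjoint]

end ContinuousLinearMap

section Column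

variable {𝕜 E : Type*} [RCLike 𝕜] [NormedAddCommGroup E] [InnerProductSpace 𝕜 E] [CompleteSpace E]
  {A B : E →L[𝕜] E}

theorem IsSelfAdjoint.closure_range_mul_self (hA : IsSelfAdjoint A) :
    closure (range ⇑(A * A)) = closure (range A) := by
  have h := A.topologicalClosure_range_comp_adjoint
  rw [hA.adjoint_eq] at h
  simpa [Submodule.topologicalClosure_coe, LinearMap.coe_range] using
    congrArg ((↑) : Submodule 𝕜 E → Set E) h

theorem inner_add_inner_eq_of_mul_self_add_mul_self_eq_one (hA : IsSelfAdjoint A)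
    (hB : IsSelfAdjoint B) (hAB : A * A + B * B = 1) (u v : E) :
    inner 𝕜 (A u) (A v) + inner 𝕜 (B u) (B v) = inner 𝕜 u v := by
  rw [← A.adjoint_inner_right, ← B.adjoint_inner_right, hA.adjoint_eq, hB.adjoint_eq,
    ← inner_add_right]
  congr 1
  simpa using congrArg (· v) hAB

theorem norm_le_two_mul_norm_prod_apply (hA : IsSelfAdjoint A)
    (hB : IsSelfAdjoint B) (hAB : A * A + B * B = 1) (k : E) :
    ‖k‖ ≤ 2 * ‖A.prod B k‖ := by
  have hk : ‖A k‖ ^ 2 + ‖B k‖ ^ 2 = ‖k‖ ^ 2 := by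
    have := congrArg RCLike.re (inner_add_inner_eq_of_mul_self_add_mul_self_eq_one hA hB hAB k k)
    simpa only [map_add, inner_self_eq_norm_sq] using this
  have hAk : ‖A k‖ ≤ ‖A.prod B k‖ := norm_fst_le (A.prod B k)
  have hBk : ‖B k‖ ≤ ‖A.prod B k‖ := norm_snd_le (A.prod B k)
  nlinarith [norm_nonneg k, norm_nonneg (A k), norm_nonneg (B k)]

theorem isClosed_range_prod_of_mul_self_add_mul_self_eq_one (hA : IsSelfAdjoint A)
    (hB : IsSelfAdjoint B) (hAB : A * A + B * B = 1) : IsClosed (range (A.prod B)) :=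
  ((A.prod B).antilipschitz_of_bound (K := 2)
    (norm_le_two_mul_norm_prod_apply hA hB hAB)).isClosed_range (A.prod B).uniformContinuous

theorem range_prod_eq_iff_isIdempotentElem (hA : IsSelfAdjoint A) (hB : IsSelfAdjoint B)
    (hAB : A * A + B * B = 1) :
    range (A.prod B) = closure (range ⇑(A * A)) ×ˢ closure (range ⇑(B * B)) ↔
      IsIdempotentElem (B * B) := by
  have haa : A * A = 1 - B * B := eq_sub_of_add_eq hAB
  constructor
  · intro h
    have hBA : B * B * (A * A) = 0 := by
      ext x
      obtain ⟨k, hk⟩ : ((A * A) x, 0) ∈ range (A.prod B) :=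
        h ▸ ⟨subset_closure ⟨x, rfl⟩, subset_closure ⟨0, map_zero _⟩⟩
      have hAk : A k = A (A x) := congrArg Prod.fst hk
      have hBk : B k = 0 := congrArg Prod.snd hk
      have hcomm : B * B * A = A * (B * B) := by
        rw [eq_sub_of_add_eq' hAB]; noncomm_ring
      calc (B * B * (A * A)) x = (B * B * A) k := by
            change B (B (A (A x))) = B (B (A k)); rw [hAk]
        _ = A (B (B k)) := by rw [hcomm]; rfl
        _ = 0 := by rw [hBk, map_zero, map_zero]
    rwa [haa, mul_sub, mul_one, sub_eq_zero, eq_comm] at hBA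
  · intro hp
    have hAB0 : A * B = 0 := mul_eq_zero_of_isIdempotentElem_mul_self hA hB hAB hp
    have hBA0 : B * A = 0 := by
      simpa only [star_mul, hA.star_eq, hB.star_eq, star_zero] using congrArg star hAB0
    apply subset_antisymm
    · rintro _ ⟨k, rfl⟩
      rw [hA.closure_range_mul_self, hB.closure_range_mul_self]
      exact ⟨subset_closure ⟨k, rfl⟩, subset_closure ⟨k, rfl⟩⟩
    · rw [← closure_prod_eq]
      refine closure_minimal ?_ (isClosed_range_prod_of_mul_self_add_mul_self_eq_one hA hB hAB)
      rintro ⟨_, _⟩ ⟨⟨u, rfl⟩, ⟨v, rfl⟩⟩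
      refine ⟨A u + B v, ?_⟩
      have hABv : A (B v) = 0 := DFunLike.congr_fun hAB0 v
      have hBAu : B (A u) = 0 := DFunLike.congr_fun hBA0 u
      simp only [prod_apply, map_add, hABv, hBAu, add_zero, zero_add]
      rfl

end Column

theorem statement13_general [NormedAddCommGroup H] [InnerProductSpace ℂ H]
    [NormedAddCommGroup K] [InnerProductSpace ℂ K] [CompleteSpace K]
    {D : Submodule ℂ H} (h : Form D)
    (Q : ↥D →ₗ[ℂ] K) (hQ : IsRepMap h 0 Q)
    (hmin : Dense (Set.range fun φ : ↥D => Q φ))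
    (K₀ : K →L[ℂ] K)
    (A B : K →L[ℂ] K) (hA : A.IsPositive) (hB : B.IsPositive)
    (hA2 : A * A = 1 - K₀) (hB2 : B * B = K₀) :
    (∀ φ ψ : ↥D, h φ ψ =
      (inner ℂ (A (Q ψ)) (A (Q φ)) : ℂ) + (inner ℂ (B (Q ψ)) (B (Q φ)) : ℂ)) ∧
    ((closure (Set.range fun φ : ↥D => ((A (Q φ), B (Q φ)) : K × K)) =
        Set.prod (closure (Set.range fun k : K => (1 - K₀) k))
          (closure (Set.range fun k : K => K₀ k))) ↔
      K₀ * K₀ = K₀) := by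
  subst hB2
  have hAB : A * A + B * B = 1 := by rw [hA2, sub_add_cancel]
  refine ⟨fun φ ψ => ?_, ?_⟩
  · simpa using (hQ φ ψ).trans
      (inner_add_inner_eq_of_mul_self_add_mul_self_eq_one hA.isSelfAdjoint hB.isSelfAdjoint hAB
        (Q ψ) (Q φ)).symm
  · have hW : closure (Set.range fun φ : ↥D => ((A (Q φ), B (Q φ)) : K × K)) =
        Set.range (A.prod B) :=
      DenseRange.closure_range_comp_of_isClosed_range (A.prod B).continuous hmin
        (isClosed_range_prod_of_mul_self_add_mul_self_eq_one hA.isSelfAdjoint hB.isSelfAdjoint hAB)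
    rw [hW, ← hA2]
    exact range_prod_eq_iff_isIdempotentElem hA.isSelfAdjoint hB.isSelfAdjoint hAB

/-- the column map `φ ↦ ((I-K₀)^{1/2}Qφ, K₀^{1/2}Qφ)` represents `h` in
`K₁ ⊕ K₂` (`K₁ = clos ran(I-K₀)`, `K₂ = clos ran K₀`) and it is minimal iff `K₀` is an
orthogonal projection. -/
theorem statement13 [NormedAddCommGroup H] [InnerProductSpace ℂ H]
    [NormedAddCommGroup K] [InnerProductSpace ℂ K] [CompleteSpace K]
    {D : Submodule ℂ H} (h : Form D)
    (Q : ↥D →ₗ[ℂ] K) (hQ : IsRepMap h 0 Q)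
    (hmin : Dense (Set.range fun φ : ↥D => Q φ))
    (K₀ : K →L[ℂ] K) (hK₀ : K₀.IsPositive) (hK₀' : (1 - K₀).IsPositive)
    (A B : K →L[ℂ] K) (hA : A.IsPositive) (hB : B.IsPositive)
    (hA2 : A * A = 1 - K₀) (hB2 : B * B = K₀) :
    (∀ φ ψ : ↥D, h φ ψ =
      (inner ℂ (A (Q ψ)) (A (Q φ)) : ℂ) + (inner ℂ (B (Q ψ)) (B (Q φ)) : ℂ)) ∧
    ((closure (Set.range fun φ : ↥D => ((A (Q φ), B (Q φ)) : K × K)) =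
        Set.prod (closure (Set.range fun k : K => (1 - K₀) k))
          (closure (Set.range fun k : K => K₀ k))) ↔
      K₀ * K₀ = K₀) :=
  statement13_general h Q hQ hmin K₀ A B hA hB hA2 hB2
end
end

section
/- Let h₁, h₂ be nonnegative forms on a common domain, let Q be a minimal representing map for h = h₁ + h₂, and let K₀ be the nonnegative contraction with h₁ = ‖(I−K₀)^{1/2}Q·‖², h₂ = ‖K₀^{1/2}Q·‖². Then the parallel sum satisfies (h₁ : h₂)[φ,ψ] = ⟨((I−K₀):K₀) Qφ, Qψ⟩ for all φ, ψ in the common domain, where (I−K₀):K₀ denotes the parallel sum of bounded nonnegative operators. -/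
/-! Writing `h₁ = ‖A Q·‖²` and `h₂ = ‖B Q·‖²` with `A² = I - K₀`, `B² = K₀`, the quantity
`h₁[χ + φ] + h₂[χ]` is the parallel-sum objective `⟨(I - K₀)(g + Qφ), g + Qφ⟩ + ⟨K₀ g, g⟩`
evaluated at `g = Qχ`. This objective is continuous in `g` and `ran Q` is dense, so its
infimum over `ran Q` equals its infimum over all of `K`, which is `⟨((I - K₀) : K₀) Qφ, Qφ⟩`. -/

open Filter Topology
open scoped ComplexOrder

noncomputable section

variable {H K K' : Type*}

open Set

section Infimum

variable {X Y α : Type*} [TopologicalSpace X] [TopologicalSpace α] [Preorder α]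
  [ClosedIciTopology α]

theorem DenseRange.isGLB_range_comp_iff {f : X → α} (hf : Continuous f) {Q : Y → X}
    (hQ : DenseRange Q) {a : α} : IsGLB (range (f ∘ Q)) a ↔ IsGLB (range f) a := by
  rw [range_comp]
  exact isGLB_congr (hQ.lowerBounds_image hf)

end Infimum

namespace ContinuousLinearMap

variable {K : Type*} [NormedAddCommGroup K] [InnerProductSpace ℂ K]

def parallelSumObjective (T : K →L[ℂ] K) (k g : K) : ℝ :=
  (inner ℂ (g + k) ((1 - T) (g + k))).re + (inner ℂ g (T g)).re

theorem continuous_parallelSumObjective (T : K →L[ℂ] K) (k : K) :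
    Continuous (parallelSumObjective T k) := by
  unfold parallelSumObjective
  fun_prop

end ContinuousLinearMap

open ContinuousLinearMap in
theorem statement14_general [NormedAddCommGroup H] [InnerProductSpace ℂ H]
    [NormedAddCommGroup K] [InnerProductSpace ℂ K]
    {D : Submodule ℂ H} (h₁ h₂ : Form D)
    (Q : ↥D →ₗ[ℂ] K)
    (hmin : Dense (Set.range fun φ : ↥D => Q φ))
    (K₀ : K →L[ℂ] K)
    (A B : K →L[ℂ] K) (hA : A.IsPositive) (hB : B.IsPositive)
    (hA2 : A * A = 1 - K₀) (hB2 : B * B = K₀)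
    (hh₁ : ∀ φ ψ : ↥D, h₁ φ ψ = (inner ℂ (A (Q ψ)) (A (Q φ)) : ℂ))
    (hh₂ : ∀ φ ψ : ↥D, h₂ φ ψ = (inner ℂ (B (Q ψ)) (B (Q φ)) : ℂ))
    (C : K →L[ℂ] K)
    (hC : ∀ k : K, IsGLB {r : ℝ | ∃ g : K,
        r = (inner ℂ (g + k) ((1 - K₀) (g + k)) : ℂ).re + (inner ℂ g (K₀ g) : ℂ).re}
      ((inner ℂ k (C k) : ℂ).re)) :
    ∀ φ : ↥D, IsGLB {r : ℝ | ∃ χ : ↥D,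
        r = (h₁ (χ + φ) (χ + φ)).re + (h₂ χ χ).re}
      ((inner ℂ (Q φ) (C (Q φ)) : ℂ).re) := by
  intro φ
  have hforms : ∀ χ : ↥D, (h₁ (χ + φ) (χ + φ)).re + (h₂ χ χ).re =
      parallelSumObjective K₀ (Q φ) (Q χ) := by
    intro χ
    rw [hh₁, hh₂, hA.inner_left_eq_inner_right, ← mul_apply_eq_comp A A, hA2,
      hB.inner_left_eq_inner_right, ← mul_apply_eq_comp B B, hB2, map_add]
    rfl
  have hrange : {r : ℝ | ∃ χ : ↥D, r = (h₁ (χ + φ) (χ + φ)).re + (h₂ χ χ).re} =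
      range (parallelSumObjective K₀ (Q φ) ∘ Q) := by
    ext r
    simp only [mem_ofPred_eq, mem_range, Function.comp_apply, hforms, eq_comm]
  rw [hrange, DenseRange.isGLB_range_comp_iff (continuous_parallelSumObjective K₀ (Q φ)) hmin]
  simpa only [range, eq_comm, parallelSumObjective] using hC (Q φ)

/-- the parallel sum of the summands `h₁, h₂` is represented by the
parallel sum of the operators `I - K₀` and `K₀` (both parallel sums given as infima). -/
theorem statement14 [NormedAddCommGroup H] [InnerProductSpace ℂ H]
    [NormedAddCommGroup K] [InnerProductSpace ℂ K] [CompleteSpace K]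
    {D : Submodule ℂ H} (h h₁ h₂ : Form D)
    (hsum : ∀ φ ψ : ↥D, h φ ψ = h₁ φ ψ + h₂ φ ψ)
    (Q : ↥D →ₗ[ℂ] K) (hQ : IsRepMap h 0 Q)
    (hmin : Dense (Set.range fun φ : ↥D => Q φ))
    (K₀ : K →L[ℂ] K) (hK₀ : K₀.IsPositive) (hK₀' : (1 - K₀).IsPositive)
    (A B : K →L[ℂ] K) (hA : A.IsPositive) (hB : B.IsPositive)
    (hA2 : A * A = 1 - K₀) (hB2 : B * B = K₀)
    (hh₁ : ∀ φ ψ : ↥D, h₁ φ ψ = (inner ℂ (A (Q ψ)) (A (Q φ)) : ℂ))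
    (hh₂ : ∀ φ ψ : ↥D, h₂ φ ψ = (inner ℂ (B (Q ψ)) (B (Q φ)) : ℂ))
    (C : K →L[ℂ] K)
    (hC : ∀ k : K, IsGLB {r : ℝ | ∃ g : K,
        r = (inner ℂ (g + k) ((1 - K₀) (g + k)) : ℂ).re + (inner ℂ g (K₀ g) : ℂ).re}
      ((inner ℂ k (C k) : ℂ).re)) :
    ∀ φ : ↥D, IsGLB {r : ℝ | ∃ χ : ↥D,
        r = (h₁ (χ + φ) (χ + φ)).re + (h₂ χ χ).re}
      ((inner ℂ (Q φ) (C (Q φ)) : ℂ).re) :=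
  statement14_general h₁ h₂ Q hmin K₀ A B hA hB hA2 hB2 hh₁ hh₂ C hC
end
end

section
/- In the setting above (minimal representing map Q for h = h₁ + h₂ with parameter contraction K₀), the forms h₁ and h₂ are mutually singular (i.e., their parallel sum h₁ : h₂ is the zero form) if and only if K₀ is an orthogonal projection. -/
open Filter Topology
open scoped ComplexOrder

noncomputable section

variable {H K K' : Type*}

/-! Write `T = 1 - K₀`. Since `A² = T`, `B² = K₀` and `T + K₀ = 1`, completing the square gives
`h₁[χ + φ] + h₂[χ] = ‖Qχ + T Qφ‖² + ⟪(K₀ - K₀²) Qφ, Qφ⟫`. As `ran Q` is dense, the infimum over `χ`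
is the last term, so `(h₁ : h₂)[φ] = ⟪(K₀ - K₀²) Qφ, Qφ⟫`. This vanishes for all `φ` iff the
quadratic form of the symmetric operator `K₀ - K₀²` vanishes on `ran Q`, hence everywhere, which
over `ℂ` means `K₀² = K₀`. -/

namespace ContinuousLinearMap

variable {𝕜 E : Type*} [RCLike 𝕜] [NormedAddCommGroup E] [InnerProductSpace 𝕜 E]

theorem norm_sq_apply_eq_reApplyInnerSelf_mul_self {A : E →L[𝕜] E}
    (hA : (A : E →ₗ[𝕜] E).IsSymmetric) (z : E) : ‖A z‖ ^ 2 = (A * A).reApplyInnerSelf z := by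
  rw [reApplyInnerSelf_apply, mul_apply_eq_comp, hA.apply_clm, inner_self_eq_norm_sq]

theorem reApplyInnerSelf_eq_zero_iff {T : E →L[𝕜] E} (hT : (T : E →ₗ[𝕜] E).IsSymmetric) :
    (∀ x, T.reApplyInnerSelf x = 0) ↔ T = 0 := by
  rw [← coe_inj, toLinearMap_zero, ← hT.inner_map_self_eq_zero]
  refine forall_congr' fun x => ?_
  rw [coe_coe, ← hT.coe_reApplyInnerSelf_apply, RCLike.ofReal_eq_zero]

open RCLike in
theorem reApplyInnerSelf_one_sub_add_eq_norm_sq_add {K₀ : E →L[𝕜] E}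
    (hK : (K₀ : E →ₗ[𝕜] E).IsSymmetric) (x y : E) :
    (1 - K₀).reApplyInnerSelf (x + y) + K₀.reApplyInnerSelf x =
      ‖x + (1 - K₀) y‖ ^ 2 + (K₀ - K₀ * K₀).reApplyInnerSelf y := by
  have hxy : re (inner 𝕜 y x) = re (inner 𝕜 x y) := inner_re_symm y x
  have hK_yx : re (inner 𝕜 y (K₀ x)) = re (inner 𝕜 x (K₀ y)) := by
    rw [inner_re_symm, ← hK.apply_clm]
  rw [← inner_self_eq_norm_sq (𝕜 := 𝕜)]
  simp only [reApplyInnerSelf_apply, sub_apply, one_apply_eq_self, mul_apply_eq_comp, map_add,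
    map_sub, inner_add_left, inner_add_right, inner_sub_left, inner_sub_right, hK.apply_clm]
  linarith

end ContinuousLinearMap

theorem isGLB_norm_sq_add_of_denseRange {α E : Type*} [SeminormedAddCommGroup E] {f : α → E}
    (hf : DenseRange f) (v : E) (c : ℝ) : IsGLB {r : ℝ | ∃ a, r = ‖f a + v‖ ^ 2 + c} c := by
  refine isGLB_of_mem_closure (by rintro _ ⟨a, rfl⟩; exact le_add_of_nonneg_left (sq_nonneg _)) ?_
  convert map_mem_closure (f := fun x : E => ‖x + v‖ ^ 2 + c)
    (t := {r : ℝ | ∃ a, r = ‖f a + v‖ ^ 2 + c}) (by fun_prop) (hf (-v))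
    (Set.forall_mem_range.2 fun a => ⟨a, rfl⟩) using 1
  simp

theorem statement15_general [NormedAddCommGroup H] [InnerProductSpace ℂ H]
    [NormedAddCommGroup K] [InnerProductSpace ℂ K]
    {D : Submodule ℂ H} (h₁ h₂ : Form D)
    (Q : ↥D →ₗ[ℂ] K)
    (hmin : Dense (Set.range fun φ : ↥D => Q φ))
    (K₀ : K →L[ℂ] K) (hK₀ : K₀.IsPositive)
    (A B : K →L[ℂ] K) (hA : A.IsPositive) (hB : B.IsPositive)
    (hA2 : A * A = 1 - K₀) (hB2 : B * B = K₀)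
    (hh₁ : ∀ φ ψ : ↥D, h₁ φ ψ = (inner ℂ (A (Q ψ)) (A (Q φ)) : ℂ))
    (hh₂ : ∀ φ ψ : ↥D, h₂ φ ψ = (inner ℂ (B (Q ψ)) (B (Q φ)) : ℂ)) :
    (∀ φ : ↥D, IsGLB {r : ℝ | ∃ χ : ↥D,
        r = (h₁ (χ + φ) (χ + φ)).re + (h₂ χ χ).re} 0) ↔
      K₀ * K₀ = K₀ := by
  have hK := hK₀.isSymmetric
  have hval (φ χ : ↥D) : (h₁ (χ + φ) (χ + φ)).re + (h₂ χ χ).re =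
      ‖Q χ + (1 - K₀) (Q φ)‖ ^ 2 + (K₀ - K₀ * K₀).reApplyInnerSelf (Q φ) := by
    rw [hh₁, hh₂, ← RCLike.re_to_complex, ← RCLike.re_to_complex, inner_self_eq_norm_sq,
      inner_self_eq_norm_sq, map_add,
      ContinuousLinearMap.norm_sq_apply_eq_reApplyInnerSelf_mul_self hA.isSymmetric,
      ContinuousLinearMap.norm_sq_apply_eq_reApplyInnerSelf_mul_self hB.isSymmetric, hA2, hB2,
      ContinuousLinearMap.reApplyInnerSelf_one_sub_add_eq_norm_sq_add hK]
  have hglb (φ : ↥D) : IsGLB {r : ℝ | ∃ χ : ↥D, r = (h₁ (χ + φ) (χ + φ)).re + (h₂ χ χ).re}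
      ((K₀ - K₀ * K₀).reApplyInnerSelf (Q φ)) := by
    simp_rw [hval φ]
    exact isGLB_norm_sq_add_of_denseRange hmin _ _
  have hP : ((K₀ - K₀ * K₀ : K →L[ℂ] K) : K →ₗ[ℂ] K).IsSymmetric := by
    rw [ContinuousLinearMap.toLinearMap_sub, ContinuousLinearMap.toLinearMap_mul]
    exact hK.sub (hK.mul_of_commute hK (Commute.refl _))
  calc (∀ φ : ↥D, IsGLB _ 0)
      ↔ ∀ φ : ↥D, (K₀ - K₀ * K₀).reApplyInnerSelf (Q φ) = 0 :=
        forall_congr' fun φ => ⟨(hglb φ).unique, fun h => h ▸ hglb φ⟩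
    _ ↔ ∀ y, (K₀ - K₀ * K₀).reApplyInnerSelf y = 0 :=
        ⟨fun h => congrFun (Continuous.ext_on hmin
          (ContinuousLinearMap.reApplyInnerSelf_continuous _) continuous_const
          (Set.forall_mem_range.2 h)), fun h φ => h _⟩
    _ ↔ K₀ - K₀ * K₀ = 0 := ContinuousLinearMap.reApplyInnerSelf_eq_zero_iff hP
    _ ↔ K₀ * K₀ = K₀ := sub_eq_zero.trans eq_comm

/-- the summands `h₁, h₂` are mutually singular (their parallel sum
vanishes) iff the parameter contraction `K₀` is an orthogonal projection. -/
theorem statement15 [NormedAddCommGroup H] [InnerProductSpace ℂ H]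
    [NormedAddCommGroup K] [InnerProductSpace ℂ K] [CompleteSpace K]
    {D : Submodule ℂ H} (h h₁ h₂ : Form D)
    (hsum : ∀ φ ψ : ↥D, h φ ψ = h₁ φ ψ + h₂ φ ψ)
    (Q : ↥D →ₗ[ℂ] K) (hQ : IsRepMap h 0 Q)
    (hmin : Dense (Set.range fun φ : ↥D => Q φ))
    (K₀ : K →L[ℂ] K) (hK₀ : K₀.IsPositive) (hK₀' : (1 - K₀).IsPositive)
    (A B : K →L[ℂ] K) (hA : A.IsPositive) (hB : B.IsPositive)
    (hA2 : A * A = 1 - K₀) (hB2 : B * B = K₀)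
    (hh₁ : ∀ φ ψ : ↥D, h₁ φ ψ = (inner ℂ (A (Q ψ)) (A (Q φ)) : ℂ))
    (hh₂ : ∀ φ ψ : ↥D, h₂ φ ψ = (inner ℂ (B (Q ψ)) (B (Q φ)) : ℂ)) :
    (∀ φ : ↥D, IsGLB {r : ℝ | ∃ χ : ↥D,
        r = (h₁ (χ + φ) (χ + φ)).re + (h₂ χ χ).re} 0) ↔
      K₀ * K₀ = K₀ :=
  statement15_general h₁ h₂ Q hmin K₀ hK₀ A B hA hB hA2 hB2 hh₁ hh₂
end
end

section
/- Let t be a semibounded form on H, c ≤ m(t), and Q_c a representing map for t − c. Define the symmetric relation S_t = Q_c*Q_c + c in H. Then S_t is bounded below by m(t), dom S_t ⊂ dom t, and for each (φ, φ') ∈ S_t one has t[φ,ψ] = ⟨φ',ψ⟩ for all ψ ∈ dom t. Moreover, if H₀ is any symmetric relation with dom H₀ ⊂ dom t such that every (φ,φ') ∈ H₀ satisfies t[φ,ψ] = ⟨φ',ψ⟩ for all ψ ∈ dom t, then H₀ ⊂ S_t. -/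
open Filter Topology
open scoped ComplexOrder

noncomputable section

variable {H K K' : Type*}

/-!
Since `t - c = ⟨Q·, Q·⟩`, the defining identity `⟨Qψ, Qφ⟩ = ⟨ψ, φ' - cφ⟩` of
`(φ, φ') ∈ Q*Q + c` is just a rewriting of `t[φ, ψ] = ⟨φ', ψ⟩`. Hence `S_t` consists of exactly
the pairs representing `t`, which gives the domain inclusion, the representation property and
maximality at once. Symmetry follows because `t` is Hermitian, and the lower bound because
`⟨φ', φ⟩ = t[φ]` is a real number bounded below by `m(t)‖φ‖²`.
-/

section Representation

variable [NormedAddCommGroup H] [InnerProductSpace ℂ H]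
  [NormedAddCommGroup K] [InnerProductSpace ℂ K] {D : Submodule ℂ H}

def Represents (t : Form D) (p : H × H) : Prop :=
  ∃ h : p.1 ∈ D, ∀ ψ : ↥D, t ⟨p.1, h⟩ ψ = (inner ℂ (ψ : H) p.2 : ℂ)

theorem IsRepMap.conj_apply {t : Form D} {c : ℝ} {Q : ↥D →ₗ[ℂ] K} (hQ : IsRepMap t c Q)
    (φ ψ : ↥D) : starRingEnd ℂ (t ψ φ) = t φ ψ := by
  have hψφ := congrArg (starRingEnd ℂ) (hQ ψ φ)
  rw [map_sub, map_mul, inner_conj_symm, inner_conj_symm, Complex.conj_ofReal] at hψφ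
  linear_combination hψφ - hQ φ ψ

theorem IsRepMap.mem_stRel_iff {t : Form D} {c : ℝ} {Q : ↥D →ₗ[ℂ] K} (hQ : IsRepMap t c Q)
    (p : H × H) : p ∈ StRel Q c ↔ Represents t p := by
  refine exists_congr fun h => forall_congr' fun ψ => ?_
  rw [← hQ, inner_sub_right, inner_smul_right]
  constructor <;> intro hψ <;> linear_combination hψ

theorem isSymmRel_of_represents {t : Form D} (ht : ∀ φ ψ, starRingEnd ℂ (t ψ φ) = t φ ψ)
    {R : Set (H × H)} (hR : ∀ p ∈ R, Represents t p) : IsSymmRel R := by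
  intro p hp q hq
  obtain ⟨hp₁, hpt⟩ := hR p hp
  obtain ⟨hq₁, hqt⟩ := hR q hq
  rw [← inner_conj_symm q.2, ← hpt ⟨q.1, hq₁⟩, ← ht, hqt ⟨p.1, hp₁⟩]

theorem bddBelowBy_of_mem_lowerBounds_rayleighSet {t : Form D}
    (ht : ∀ φ, ((t φ φ).re : ℂ) = t φ φ) {m : ℝ} (hm : m ∈ lowerBounds (rayleighSet t)) :
    BddBelowBy t m := by
  intro φ
  rw [← ht, Complex.real_le_real]
  by_cases hφ : (φ : H) = 0
  · rw [Submodule.coe_eq_zero.mp hφ]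
    simp
  · have hpos : 0 < ‖(φ : H)‖ ^ 2 := by positivity
    have := hm ⟨φ, hφ, rfl⟩
    rwa [le_div_iff₀ hpos] at this

end Representation

theorem statement16_general [NormedAddCommGroup H] [InnerProductSpace ℂ H]
    [NormedAddCommGroup K] [InnerProductSpace ℂ K]
    {D : Submodule ℂ H} (t : Form D) (m c : ℝ)
    (hm : IsGLB (rayleighSet t) m)
    (Q : ↥D →ₗ[ℂ] K) (hQ : IsRepMap t c Q) :
    IsSymmRel (StRel Q c) ∧
      (∀ p ∈ StRel Q c, (↑(m * ‖p.1‖ ^ 2) : ℂ) ≤ (inner ℂ p.1 p.2 : ℂ)) ∧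
      (∀ p ∈ StRel Q c, p.1 ∈ D) ∧
      (∀ p ∈ StRel Q c, ∃ h : p.1 ∈ D,
        ∀ ψ : ↥D, t ⟨p.1, h⟩ ψ = (inner ℂ (ψ : H) p.2 : ℂ)) ∧
      (∀ R : Set (H × H), IsSymmRel R →
        (∀ p ∈ R, ∃ h : p.1 ∈ D,
          ∀ ψ : ↥D, t ⟨p.1, h⟩ ψ = (inner ℂ (ψ : H) p.2 : ℂ)) →
        R ⊆ StRel Q c) := by
  have hrep : ∀ p ∈ StRel Q c, Represents t p := fun p => (hQ.mem_stRel_iff p).1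
  have hreal : ∀ φ, ((t φ φ).re : ℂ) = t φ φ := fun φ =>
    Complex.conj_eq_iff_re.mp (hQ.conj_apply φ φ)
  have hbdd : BddBelowBy t m := bddBelowBy_of_mem_lowerBounds_rayleighSet hreal hm.1
  refine ⟨isSymmRel_of_represents hQ.conj_apply hrep, fun p hp => ?_, fun p hp => hp.1, hrep,
    fun R _ hR p hp => (hQ.mem_stRel_iff p).2 (hR p hp)⟩
  obtain ⟨h, hpt⟩ := hrep p hp
  have := hbdd ⟨p.1, h⟩
  rwa [hpt] at this

/-- the symmetric relation `S_t = Q*Q + c` is bounded below by `m(t)`,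
its domain lies in `dom t`, its elements represent `t`, and it is maximal among
symmetric relations with this representing property. -/
theorem statement16 [NormedAddCommGroup H] [InnerProductSpace ℂ H] [CompleteSpace H]
    [NormedAddCommGroup K] [InnerProductSpace ℂ K] [CompleteSpace K]
    {D : Submodule ℂ H} (t : Form D) (m c : ℝ)
    (hm : IsGLB (rayleighSet t) m) (hc : c ≤ m)
    (Q : ↥D →ₗ[ℂ] K) (hQ : IsRepMap t c Q) :
    IsSymmRel (StRel Q c) ∧
      (∀ p ∈ StRel Q c, (↑(m * ‖p.1‖ ^ 2) : ℂ) ≤ (inner ℂ p.1 p.2 : ℂ)) ∧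
      (∀ p ∈ StRel Q c, p.1 ∈ D) ∧
      (∀ p ∈ StRel Q c, ∃ h : p.1 ∈ D,
        ∀ ψ : ↥D, t ⟨p.1, h⟩ ψ = (inner ℂ (ψ : H) p.2 : ℂ)) ∧
      (∀ R : Set (H × H), IsSymmRel R →
        (∀ p ∈ R, ∃ h : p.1 ∈ D,
          ∀ ψ : ↥D, t ⟨p.1, h⟩ ψ = (inner ℂ (ψ : H) p.2 : ℂ)) →
        R ⊆ StRel Q c) :=
  statement16_general t m c hm Q hQ
end
end
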